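/- Let n ≥ 1 and let λ = (λ₁, …, λₙ) be a weakly decreasing sequence of nonnegative integers. Then the number of minimal (monotone) lattice paths contained in the Young diagram of λ from its southwestern corner (0,0) to its northeastern corner, i.e. #{(b₁, …, bₙ) ∈ ℤⁿ : b₁ ≥ b₂ ≥ … ≥ bₙ and 0 ≤ bᵢ ≤ λᵢ for all i}, equals det(M) where M is the n×n matrix with (i,j)-entry the binomial coefficient C(λⱼ + 1, j − i + 1). (This is Narayana's path-counting formula, the special case μ = ∅ of Kreweras's theorem.) -/

import Mathlib

/-!
Both the number of paths and the determinant satisfy `f λ = f (λ - 1) + f (λ₁, …, λₙ₋₁)`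
while `λₙ ≥ 0`, and both vanish when `λₙ = -1`. For paths, split on whether `bₙ = 0`; the
paths with `bₙ ≥ 1` are those of `λ - 1` shifted one unit east. For the determinant, Pascal's
rule writes the matrix of `λ` as the matrix of `λ - 1` with each row increased by the row below
it, except the last, which is increased by a unit vector; expanding along that row gives the
matrix of `(λ₁, …, λₙ₋₁)`. Allowing integer parts `≥ -1` lets a double induction (on `n`, then
on `λₙ`) run down to the empty diagram.
-/

/-- Integer binomial coefficient with the convention `C(m, k) = 0` whenever
`k < 0` or `k > m`. -/
def intChoose (m k : ℤ) : ℤ :=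
  if 0 ≤ k ∧ k ≤ m then (m.toNat.choose k.toNat : ℤ) else 0

open Matrix

section intChoose

theorem intChoose_natCast (m k : ℕ) : intChoose m k = m.choose k := by
  unfold intChoose
  split_ifs with h
  · simp
  · rw [Nat.choose_eq_zero_of_lt (by omega), Nat.cast_zero]

theorem intChoose_of_neg (m : ℤ) {k : ℤ} (hk : k < 0) : intChoose m k = 0 :=
  if_neg (by omega)

theorem intChoose_of_lt {m k : ℤ} (h : m < k) : intChoose m k = 0 :=
  if_neg (by omega)

theorem intChoose_zero_right {m : ℤ} (hm : 0 ≤ m) : intChoose m 0 = 1 := by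
  lift m to ℕ using hm
  simpa using intChoose_natCast m 0

theorem intChoose_succ {m : ℤ} (hm : 0 ≤ m) (k : ℤ) :
    intChoose (m + 1) k = intChoose m k + intChoose m (k - 1) := by
  lift m to ℕ using hm
  rcases lt_or_ge k 0 with hk | hk
  · simp [intChoose_of_neg _ hk, intChoose_of_neg _ (show k - 1 < 0 by omega)]
  lift k to ℕ using hk
  cases k with
  | zero => simp [intChoose_zero_right, intChoose_of_neg, show (0 : ℤ) ≤ m + 1 by omega]
  | succ k =>
    rw [show (m : ℤ) + 1 = ((m + 1 : ℕ) : ℤ) by push_cast; rfl, Nat.cast_succ k,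
      add_sub_cancel_right, ← Nat.cast_succ, intChoose_natCast, intChoose_natCast,
      intChoose_natCast, Nat.choose_succ_succ', Nat.cast_add, add_comm]

end intChoose

section det

variable {R : Type*} [CommRing R] {m : ℕ}

theorem det_updateRow_single (A : Matrix (Fin (m + 1)) (Fin (m + 1)) R) (i j : Fin (m + 1))
    (c : R) :
    (A.updateRow i (Pi.single j c)).det =
      (-1) ^ (i + j : ℕ) * c * (A.submatrix i.succAbove j.succAbove).det := by
  rw [det_succ_row _ i, Fintype.sum_eq_single j fun k hk => by simp [hk]]
  congr 2
  · simp
  · ext k l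
    simp

theorem det_eq_of_row_eq_add_row_succ (V X : Matrix (Fin (m + 1)) (Fin (m + 1)) R)
    (hsucc : ∀ i : Fin m, X i.castSucc = V i.castSucc + V i.succ)
    (hlast : X (Fin.last m) = V (Fin.last m)) :
    X.det = V.det := by
  let S : Matrix (Fin (m + 1)) (Fin (m + 1)) R := of fun i j => if (i : ℕ) + 1 = j then 1 else 0
  have hS_castSucc (i : Fin m) : (S * V) i.castSucc = V i.succ := by
    ext j
    rw [mul_apply, Fintype.sum_eq_single i.succ fun k hk => ?_]
    · simp [S]
    · simp only [S, of_apply, Fin.val_castSucc, ite_mul, one_mul, zero_mul, ite_eq_right_iff]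
      exact fun h => absurd (Fin.ext (by simpa [eq_comm] using h)) hk
  have hS_last : (S * V) (Fin.last m) = 0 := by
    ext j
    rw [mul_apply, Pi.zero_apply]
    refine Finset.sum_eq_zero fun k _ => ?_
    simp [S, show m + 1 ≠ (k : ℕ) by omega]
  have hX : X = (1 + S) * V := by
    ext i j
    rw [add_mul, one_mul]
    induction i using Fin.lastCases with
    | last => simp [hlast, hS_last]
    | cast i => simp [hsucc, hS_castSucc]
  have hdet : (1 + S).det = 1 := by
    rw [det_of_isUpperTriangular]
    · simp [S]
    · intro i j hij
      have : (j : ℕ) < i := hij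
      have hne : i ≠ j := by rintro rfl; omega
      simp [S, one_apply, hne, show (i : ℕ) + 1 ≠ j by omega]
  rw [hX, det_mul, hdet, one_mul]

end det

section narayanaMatrix

variable {n m : ℕ}

def narayanaMatrix (lam : Fin n → ℤ) : Matrix (Fin n) (Fin n) ℤ :=
  fun i j => intChoose (lam j + 1) (((j : ℕ) : ℤ) - ((i : ℕ) : ℤ) + 1)

theorem det_narayanaMatrix_of_last_eq_neg_one (lam : Fin (m + 1) → ℤ)
    (h : lam (Fin.last m) = -1) : (narayanaMatrix lam).det = 0 :=
  det_eq_zero_of_column_eq_zero (Fin.last m) fun i =>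
    intChoose_of_lt (by rw [h, Fin.val_last]; have := i.is_le; omega)

theorem det_narayanaMatrix_eq_add (lam : Fin (m + 1) → ℤ) (hlam : ∀ j, 0 ≤ lam j) :
    (narayanaMatrix lam).det =
      (narayanaMatrix fun j => lam j - 1).det + (narayanaMatrix (Fin.init lam)).det := by
  set N := narayanaMatrix lam
  set V := narayanaMatrix fun j => lam j - 1
  have hpascal (i j) : N i j = V i j + intChoose (lam j) ((j : ℕ) - (i : ℕ)) := by
    simp only [N, V, narayanaMatrix, sub_add_cancel, intChoose_succ (hlam j), add_sub_cancel_right]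
  have hlast : N (Fin.last m) = V (Fin.last m) + Pi.single (Fin.last m) 1 := by
    ext j
    rw [hpascal, Pi.add_apply]
    congr 1
    induction j using Fin.lastCases with
    | last => simp [intChoose_zero_right (hlam _)]
    | cast j => simp [intChoose_of_neg, Fin.castSucc_ne_last]
  have hsucc (i : Fin m) : N i.castSucc = V i.castSucc + V i.succ := by
    ext j
    rw [hpascal, Pi.add_apply]
    congr 1
    simp only [V, narayanaMatrix, sub_add_cancel, Fin.val_succ, Fin.val_castSucc]
    congr 1
    push_cast
    ring
  calc N.det = (N.updateRow (Fin.last m) (V (Fin.last m) + Pi.single (Fin.last m) 1)).det := by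
        rw [← hlast, updateRow_eq_self]
    _ = V.det + (N.submatrix Fin.castSucc Fin.castSucc).det := by
        rw [det_updateRow_add, det_updateRow_single, Fin.succAbove_last,
          det_eq_of_row_eq_add_row_succ V _ (fun i => ?_) (updateRow_self ..)]
        · simp [← two_mul, pow_mul]
        · rw [updateRow_ne (Fin.castSucc_ne_last i), hsucc]
    _ = V.det + (narayanaMatrix (Fin.init lam)).det := rfl

end narayanaMatrix

section pathSet

variable {α : Type*} [Preorder α] {n m : ℕ}

theorem Fin.antitone_snoc_iff {c : Fin m → α} {x : α} :
    Antitone (Fin.snoc c x : Fin (m + 1) → α) ↔ Antitone c ∧ ∀ i, x ≤ c i := by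
  refine ⟨fun h => ⟨fun i j hij => ?_, fun i => ?_⟩, fun ⟨hc, hx⟩ i j hij => ?_⟩
  · simpa using h (Fin.castSucc_le_castSucc_iff.2 hij)
  · simpa using h (Fin.le_last i.castSucc)
  · induction j using Fin.lastCases with
    | last =>
      induction i using Fin.lastCases with
      | last => rfl
      | cast i => simpa using hx i
    | cast j =>
      induction i using Fin.lastCases with
      | last => exact absurd hij (Fin.castSucc_lt_last j).not_ge
      | cast i => simpa using hc (Fin.castSucc_le_castSucc_iff.1 hij)

def pathSet (lam : Fin n → ℤ) : Set (Fin n → ℤ) :=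
  {b | Antitone b ∧ ∀ i, 0 ≤ b i ∧ b i ≤ lam i}

theorem pathSet_finite (lam : Fin n → ℤ) : (pathSet lam).Finite :=
  (Set.finite_Icc 0 lam).subset fun _ hb => ⟨fun i => (hb.2 i).1, fun i => (hb.2 i).2⟩

theorem ncard_pathSet_fin_zero (lam : Fin 0 → ℤ) : (pathSet lam).ncard = 1 := by
  rw [show pathSet lam = Set.univ from
    Set.eq_univ_of_forall fun b => ⟨fun i => i.elim0, fun i => i.elim0⟩]
  simp

theorem pathSet_eq_empty_of_neg (lam : Fin n → ℤ) {i : Fin n} (h : lam i < 0) :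
    pathSet lam = ∅ :=
  Set.eq_empty_of_forall_notMem fun _ hb => by have := hb.2 i; omega

theorem pathSet_inter_last_eq_zero (lam : Fin (m + 1) → ℤ) (h : 0 ≤ lam (Fin.last m)) :
    pathSet lam ∩ {b | b (Fin.last m) = 0} = (Fin.snoc · 0) '' pathSet (Fin.init lam) := by
  ext b
  simp only [pathSet, Set.mem_inter_iff, Set.mem_ofPred_eq, Set.mem_image]
  constructor
  · rintro ⟨⟨hb, hbound⟩, hlast⟩
    refine ⟨Fin.init b, ⟨hb.comp_monotone (Fin.strictMono_castSucc.monotone),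
      fun i => hbound i.castSucc⟩, ?_⟩
    rw [← hlast, Fin.snoc_init_self]
  · rintro ⟨c, ⟨hc, hcbound⟩, rfl⟩
    refine ⟨⟨Fin.antitone_snoc_iff.2 ⟨hc, fun i => (hcbound i).1⟩, fun i => ?_⟩, by simp⟩
    induction i using Fin.lastCases with
    | last => simpa using h
    | cast i => simpa [Fin.init] using hcbound i

theorem pathSet_sdiff_last_eq_zero (lam : Fin (m + 1) → ℤ) :
    pathSet lam \ {b | b (Fin.last m) = 0} = (· + 1) '' pathSet fun i => lam i - 1 := by
  ext b
  simp only [pathSet, Set.mem_sdiff, Set.mem_ofPred_eq, Set.mem_image]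
  constructor
  · rintro ⟨⟨hb, hbound⟩, hlast⟩
    refine ⟨b - 1, ⟨fun i j hij => by simpa using hb hij, fun i => ?_⟩, sub_add_cancel b 1⟩
    have := hb (Fin.le_last i)
    have := hbound i
    have := hbound (Fin.last m)
    simp only [Pi.sub_apply, Pi.one_apply]
    omega
  · rintro ⟨c, ⟨hc, hcbound⟩, rfl⟩
    refine ⟨⟨fun i j hij => by simpa using hc hij, fun i => ?_⟩, ?_⟩
    · have := hcbound i
      simp only [Pi.add_apply, Pi.one_apply]
      omega
    · have := hcbound (Fin.last m)
      simp only [Pi.add_apply, Pi.one_apply]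
      omega

theorem ncard_pathSet_eq_add (lam : Fin (m + 1) → ℤ) (h : 0 ≤ lam (Fin.last m)) :
    (pathSet lam).ncard = (pathSet fun i => lam i - 1).ncard + (pathSet (Fin.init lam)).ncard := by
  rw [← Set.ncard_inter_add_ncard_sdiff_eq_ncard _ {b | b (Fin.last m) = 0} (pathSet_finite lam),
    pathSet_inter_last_eq_zero lam h, pathSet_sdiff_last_eq_zero,
    Set.ncard_image_of_injective _ (Fin.snoc_left_injective (α := fun _ => ℤ) _),
    Set.ncard_image_of_injective _ (add_left_injective _), add_comm]

end pathSet

theorem ncard_pathSet_eq_det_narayanaMatrix {n : ℕ} (lam : Fin n → ℤ) (hlam : Antitone lam)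
    (hneg : ∀ i, -1 ≤ lam i) : ((pathSet lam).ncard : ℤ) = (narayanaMatrix lam).det := by
  induction n with
  | zero => simp [ncard_pathSet_fin_zero]
  | succ m ih =>
    obtain ⟨k, hk⟩ : ∃ k : ℕ, lam (Fin.last m) = k - 1 :=
      ⟨(lam (Fin.last m) + 1).toNat, by have := hneg (Fin.last m); omega⟩
    induction k generalizing lam with
    | zero =>
      rw [pathSet_eq_empty_of_neg lam (i := Fin.last m) (by omega),
        det_narayanaMatrix_of_last_eq_neg_one lam (by omega)]
      simp
    | succ k ihk =>
      have hnonneg (j) : 0 ≤ lam j := by have := hlam (Fin.le_last j); omega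
      rw [ncard_pathSet_eq_add lam (hnonneg _), det_narayanaMatrix_eq_add lam hnonneg,
        Nat.cast_add,
        ihk _ (fun i j hij => by simpa using hlam hij) (fun i => by linarith [hnonneg i])
          (by push_cast at hk ⊢; omega),
        ih (Fin.init lam) (hlam.comp_monotone Fin.strictMono_castSucc.monotone) fun i => hneg _]

theorem narayana_path_counting_general (n : ℕ) (lam : Fin n → ℕ)
    (hlam : Antitone lam) :
    (({b : Fin n → ℤ | Antitone b ∧ ∀ i : Fin n,
        0 ≤ b i ∧ b i ≤ (lam i : ℤ)}.ncard : ℤ)) =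
    Matrix.det (fun i j : Fin n =>
      intChoose ((lam j : ℤ) + 1) (((j : ℕ) : ℤ) - ((i : ℕ) : ℤ) + 1)) :=
  ncard_pathSet_eq_det_narayanaMatrix (fun i => (lam i : ℤ))
    (fun _ _ hij => Int.ofNat_le.2 (hlam hij)) fun i => by omega

/-- **Narayana's path-counting formula.** The number of minimal lattice paths in the
Young diagram of `λ` from its southwestern corner `(0,0)` to its northeastern corner
(counted via the sequences `b₁ ≥ … ≥ bₙ` with `0 ≤ bᵢ ≤ λᵢ`) equals
`det (C(λⱼ + 1, j − i + 1))`. -/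
theorem narayana_path_counting (n : ℕ) (hn : 1 ≤ n) (lam : Fin n → ℕ)
    (hlam : Antitone lam) :
    (({b : Fin n → ℤ | Antitone b ∧ ∀ i : Fin n,
        0 ≤ b i ∧ b i ≤ (lam i : ℤ)}.ncard : ℤ)) =
    Matrix.det (fun i j : Fin n =>
      intChoose ((lam j : ℤ) + 1) (((j : ℕ) : ℤ) - ((i : ℕ) : ℤ) + 1)) :=
  narayana_path_counting_general n lam hlam
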